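/- arXiv:1805.02189 — 2 statements merged into one kernel-verified Lean document; each statement's English description precedes it below -/
import Mathlib

section
/- Let R be a principal ideal domain and X, X′ two matrices over R (of possibly different sizes) such that E_j(X) = E_j(X′) for all j ≥ 0 (elementary ideals, with the standard conventions). Then for every R-module M, the R-modules Hom_R(coker X, M) and Hom_R(coker X′, M) are isomorphic, where coker X denotes the cokernel of the linear map represented by X. -/
open Matrix



section Minors
variable {R : Type*} [CommRing R]

/-- The ideal generated by the `s × s` minors of a matrix. -/
def minorsSpan {ι κ : Type*} (s : ℕ) (M : Matrix ι κ R) : Ideal R :=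
  Ideal.span {d | ∃ (f : Fin s → ι) (g : Fin s → κ),
    Function.Injective f ∧ Function.Injective g ∧ d = (M.submatrix f g).det}

lemma minorsSpan_transpose {ι κ : Type*} (s : ℕ) (M : Matrix ι κ R) :
    minorsSpan s Mᵀ = minorsSpan s M := by
  unfold minorsSpan
  congr 1
  ext d
  constructor
  · rintro ⟨f, g, hf, hg, rfl⟩
    exact ⟨g, f, hg, hf, by rw [← Matrix.det_transpose, Matrix.transpose_submatrix, Matrix.transpose_transpose]⟩
  · rintro ⟨f, g, hf, hg, rfl⟩
    exact ⟨g, f, hg, hf, by rw [← Matrix.det_transpose (M.submatrix f g), Matrix.transpose_submatrix]⟩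

lemma minorsSpan_mul_left {ι' ι κ : Type*} [Fintype ι] (s : ℕ)
    (A : Matrix ι' ι R) (B : Matrix ι κ R) :
    minorsSpan s (A * B) ≤ minorsSpan s B := by
  classical
  rw [minorsSpan, Ideal.span_le]
  rintro d ⟨f, g, hf, hg, rfl⟩
  have key : ((A * B).submatrix f g).det
      = ∑ h : Fin s → ι, (∏ i, A (f i) (h i)) • ((B.submatrix h g).det) := by
    have h1 : ((A * B).submatrix f g) =
        Matrix.of (fun i => ∑ k : ι, A (f i) k • fun j => B k (g j)) := by
      ext i j
      simp [Matrix.mul_apply, Finset.sum_apply]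
    rw [h1]
    have h2 := (Matrix.detRowAlternating (R := R) (n := Fin s)).toMultilinearMap.map_sum
      (g := fun i (k : ι) => A (f i) k • fun j => B k (g j))
    simp only [AlternatingMap.coe_multilinearMap] at h2
    show Matrix.detRowAlternating (fun i => ∑ k : ι, A (f i) k • fun j => B k (g j)) = _
    rw [h2]
    refine Finset.sum_congr rfl fun h _ => ?_
    have := (Matrix.detRowAlternating (R := R) (n := Fin s)).toMultilinearMap.map_smul_univ
      (fun i => A (f i) (h i)) (fun i j => B (h i) (g j))
    exact this
  rw [key]
  refine Ideal.sum_mem _ fun h _ => ?_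
  by_cases hinj : Function.Injective h
  · exact Ideal.mul_mem_left _ _ (Ideal.subset_span ⟨h, g, hinj, hg, rfl⟩)
  · have : (B.submatrix h g).det = 0 := by
      simp only [Function.Injective] at hinj
      push_neg at hinj
      obtain ⟨i, j, hij, hne⟩ := hinj
      exact Matrix.det_zero_of_row_eq hne (by ext j'; simp [hij])
    rw [smul_eq_mul, this, mul_zero]
    exact Ideal.zero_mem _

lemma minorsSpan_mul_right {ι κ κ' : Type*} [Fintype κ] (s : ℕ)
    (B : Matrix ι κ R) (Q : Matrix κ κ' R) :
    minorsSpan s (B * Q) ≤ minorsSpan s B := by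
  rw [← minorsSpan_transpose s (B * Q), Matrix.transpose_mul, ← minorsSpan_transpose s B]
  exact minorsSpan_mul_left s Qᵀ Bᵀ

lemma minorsSpan_submatrix_le {ι κ ι' κ' : Type*} (s : ℕ) (M : Matrix ι κ R)
    (e₁ : ι' → ι) (e₂ : κ' → κ) (h₁ : Function.Injective e₁) (h₂ : Function.Injective e₂) :
    minorsSpan s (M.submatrix e₁ e₂) ≤ minorsSpan s M := by
  rw [minorsSpan, Ideal.span_le]
  rintro d ⟨f, g, hf, hg, rfl⟩
  exact Ideal.subset_span ⟨e₁ ∘ f, e₂ ∘ g, h₁.comp hf, h₂.comp hg,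
    by rw [Matrix.submatrix_submatrix]⟩

lemma minorsSpan_submatrix_equiv {ι κ ι' κ' : Type*} (s : ℕ) (M : Matrix ι κ R)
    (e₁ : ι' ≃ ι) (e₂ : κ' ≃ κ) :
    minorsSpan s (M.submatrix e₁ e₂) = minorsSpan s M := by
  refine le_antisymm (minorsSpan_submatrix_le s M e₁ e₂ e₁.injective e₂.injective) ?_
  have : M = (M.submatrix e₁ e₂).submatrix e₁.symm e₂.symm := by
    ext i j; simp
  conv_lhs => rw [this]
  exact minorsSpan_submatrix_le s _ _ _ e₁.symm.injective e₂.symm.injective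

end Minors


section Coker
variable {R : Type*} [CommRing R]

lemma vecMulLinear_mul {m n o : Type*} [Fintype m] [Fintype n]
    (A : Matrix m n R) (B : Matrix n o R) :
    (A * B).vecMulLinear = B.vecMulLinear.comp A.vecMulLinear := by
  ext x j
  simp [Matrix.vecMul_vecMul]

/-- `vecMul` by a matrix with unit determinant, as a linear equivalence. -/
noncomputable def vecMulEquiv {n : Type*} [Fintype n] [DecidableEq n]
    (P : Matrix n n R) (hP : IsUnit P.det) : (n → R) ≃ₗ[R] (n → R) := by
  choose u hu using (Matrix.isUnit_iff_isUnit_det P).2 hP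
  exact LinearEquiv.ofLinear P.vecMulLinear ((↑u⁻¹ : Matrix n n R)).vecMulLinear
    (by rw [← vecMulLinear_mul]
        have : (↑u⁻¹ : Matrix n n R) * P = 1 := by rw [← hu]; exact u.inv_mul
        rw [this]; ext x j; simp)
    (by rw [← vecMulLinear_mul]
        have : P * (↑u⁻¹ : Matrix n n R) = 1 := by rw [← hu]; exact u.mul_inv
        rw [this]; ext x j; simp)

lemma vecMulEquiv_coe {n : Type*} [Fintype n] [DecidableEq n]
    (P : Matrix n n R) (hP : IsUnit P.det) :
    (vecMulEquiv P hP : (n → R) →ₗ[R] (n → R)) = P.vecMulLinear := rfl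

/-- Cokernel invariance under equivalence of matrices. -/
noncomputable def cokerEquivOfEq {n : Type*}
    [Fintype n] [DecidableEq n]
    (A B P Q : Matrix n n R)
    (hP : LinearMap.range P.vecMulLinear = ⊤) (hQ : IsUnit Q.det)
    (hA : A = P * B * Q) :
    ((n → R) ⧸ LinearMap.range A.vecMulLinear) ≃ₗ[R]
      ((n → R) ⧸ LinearMap.range B.vecMulLinear) := by
  have hrange : Submodule.map (vecMulEquiv Q hQ : (n → R) →ₗ[R] (n → R)) (LinearMap.range B.vecMulLinear)
      = LinearMap.range A.vecMulLinear := by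
    rw [hA, vecMulLinear_mul, vecMulLinear_mul, LinearMap.range_comp, LinearMap.range_comp,
      hP, Submodule.map_top]
    rfl
  exact (Submodule.Quotient.equiv _ _ (vecMulEquiv Q hQ) hrange).symm

lemma range_vecMulLinear_diagonal {N : Type*} [Fintype N] [DecidableEq N] (b : N → R) :
    LinearMap.range (Matrix.diagonal b).vecMulLinear
      = Submodule.pi Set.univ (fun i => (Ideal.span {b i} : Submodule R R)) := by
  ext y
  simp only [LinearMap.mem_range, Submodule.mem_pi, Set.mem_univ, forall_true_left]
  constructor
  · rintro ⟨x, rfl⟩ i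
    simp only [Matrix.vecMulLinear_apply, Matrix.vecMul_diagonal]
    exact Ideal.mem_span_singleton.2 ⟨x i, mul_comm _ _⟩
  · intro hy
    choose x hx using fun i => Ideal.mem_span_singleton.1 (hy i)
    refine ⟨x, ?_⟩
    ext j
    simp only [Matrix.vecMulLinear_apply, Matrix.vecMul_diagonal]
    rw [hx j]; ring

/-- The cokernel of a diagonal matrix is a product of cyclic modules. -/
noncomputable def cokerDiagonalEquiv {N : Type*} [Fintype N] [DecidableEq N] (b : N → R) :
    ((N → R) ⧸ LinearMap.range (Matrix.diagonal b).vecMulLinear) ≃ₗ[R]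
      (∀ i, R ⧸ Ideal.span {b i}) :=
  (Submodule.quotEquivOfEq _ _ (range_vecMulLinear_diagonal b)).trans
    (Submodule.quotientPi _)

lemma exists_matrix_factor {ι ι' κ : Type*} [Fintype ι] [Fintype ι']
    (Y : Matrix ι' κ R) (Xm : Matrix ι κ R)
    (h : ∀ i, Y i ∈ Submodule.span R (Set.range Xm)) :
    ∃ C : Matrix ι' ι R, Y = C * Xm := by
  choose c hc using fun i => (Submodule.mem_span_range_iff_exists_fun R).1 (h i)
  refine ⟨Matrix.of c, ?_⟩
  ext i j
  rw [Matrix.mul_apply]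
  have := congrFun (hc i) j
  simpa [Finset.sum_apply] using this.symm

end Coker


section DRel
variable {R : Type*} [CommRing R]

/-- Two vectors are diagonal-equivalent if the corresponding diagonal matrices are
equivalent via invertible matrices. -/
def DRel {ι : Type*} [Fintype ι] [DecidableEq ι] (v w : ι → R) : Prop :=
  ∃ P Q : Matrix ι ι R, IsUnit P.det ∧ IsUnit Q.det ∧
    Matrix.diagonal w = P * Matrix.diagonal v * Q

variable {ι κ : Type*} [Fintype ι] [DecidableEq ι] [Fintype κ] [DecidableEq κ]

lemma DRel.refl (v : ι → R) : DRel v v :=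
  ⟨1, 1, by simp, by simp, by simp⟩

lemma DRel.symm {v w : ι → R} : DRel v w → DRel w v := by
  rintro ⟨P, Q, hP, hQ, hE⟩
  obtain ⟨uP, huP⟩ := (Matrix.isUnit_iff_isUnit_det P).2 hP
  obtain ⟨uQ, huQ⟩ := (Matrix.isUnit_iff_isUnit_det Q).2 hQ
  refine ⟨↑uP⁻¹, ↑uQ⁻¹, (Matrix.isUnit_iff_isUnit_det _).1 uP⁻¹.isUnit,
    (Matrix.isUnit_iff_isUnit_det _).1 uQ⁻¹.isUnit, ?_⟩
  rw [hE, ← huP, ← huQ, mul_assoc (↑uP : Matrix ι ι R), Units.inv_mul_cancel_left,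
    Units.mul_inv_cancel_right]

lemma DRel.trans {u v w : ι → R} : DRel u v → DRel v w → DRel u w := by
  rintro ⟨P, Q, hP, hQ, hE⟩ ⟨P', Q', hP', hQ', hE'⟩
  refine ⟨P' * P, Q * Q', by rw [Matrix.det_mul]; exact hP'.mul hP,
    by rw [Matrix.det_mul]; exact hQ.mul hQ', ?_⟩
  rw [hE', hE]
  simp only [Matrix.mul_assoc]

lemma DRel.reindex {v w : ι → R} (e : κ ≃ ι) (h : DRel v w) :
    DRel (v ∘ e) (w ∘ e) := by
  classical
  obtain ⟨P, Q, hP, hQ, hE⟩ := h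
  set p₁ : Matrix κ ι R := (1 : Matrix ι ι R).submatrix e id with hp₁
  set p₂ : Matrix ι κ R := (1 : Matrix ι ι R).submatrix id e with hp₂
  have h12 : p₁ * p₂ = 1 := by
    ext i j
    simp [hp₁, hp₂, Matrix.mul_apply, Matrix.one_apply, e.injective.eq_iff]
  have h21 : p₂ * p₁ = 1 := by
    rw [hp₁, hp₂, Matrix.submatrix_mul_equiv (1 : Matrix ι ι R) (1 : Matrix ι ι R) id e id]
    simp
  have hcancel : ∀ X : Matrix ι κ R, p₂ * (p₁ * X) = X := by
    intro X
    rw [← Matrix.mul_assoc, h21, Matrix.one_mul]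
  have hstep : ∀ u : ι → R, p₁ * Matrix.diagonal u =
      Matrix.of (fun (i : κ) (j : ι) => Matrix.diagonal u (e i) j) := by
    intro u
    ext i j
    simp only [hp₁, Matrix.mul_apply, Matrix.submatrix_apply, id_eq, Matrix.one_apply,
      Matrix.of_apply, boole_mul]
    rw [Finset.sum_ite_eq (Finset.univ) (e i) (fun y => Matrix.diagonal u y j)]
    simp
  have hdiag : ∀ u : ι → R, p₁ * Matrix.diagonal u * p₂ = Matrix.diagonal (u ∘ e) := by
    intro u
    rw [hstep]
    ext i j
    simp only [hp₂, Matrix.mul_apply, Matrix.submatrix_apply, id_eq, Matrix.one_apply,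
      Matrix.of_apply, mul_boole]
    rw [Finset.sum_ite_eq' (Finset.univ) (e j) (fun y => Matrix.diagonal u (e i) y)]
    simp only [Finset.mem_univ, if_true, Matrix.diagonal_apply, e.injective.eq_iff,
      Function.comp_apply]
  have hconj : ∀ A B : Matrix ι ι R, (p₁ * A * p₂) * (p₁ * B * p₂) = p₁ * (A * B) * p₂ := by
    intro A B
    simp only [Matrix.mul_assoc]
    rw [hcancel]
  have hPunit : ∀ A : Matrix ι ι R, IsUnit A.det → IsUnit (p₁ * A * p₂).det := by
    intro A hA
    obtain ⟨uA, huA⟩ := (Matrix.isUnit_iff_isUnit_det A).2 hA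
    refine IsUnit.of_mul_eq_one (p₁ * (↑uA⁻¹ : Matrix ι ι R) * p₂).det ?_
    rw [← Matrix.det_mul, hconj, ← huA, Units.mul_inv, Matrix.mul_one, h12, Matrix.det_one]
  refine ⟨p₁ * P * p₂, p₁ * Q * p₂, hPunit P hP, hPunit Q hQ, ?_⟩
  rw [← hdiag w, hE, ← hdiag v, hconj, hconj]

lemma DRel.sumCongrLeft {u u' : κ → R} (v : ι → R) (h : DRel u u') :
    DRel (Sum.elim u v) (Sum.elim u' v) := by
  obtain ⟨P, Q, hP, hQ, hE⟩ := h
  have hblock : ∀ w : κ → R, Matrix.diagonal (Sum.elim w v) =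
      Matrix.fromBlocks (Matrix.diagonal w) 0 0 (Matrix.diagonal v) := by
    intro w
    ext (i | i) (j | j) <;> simp [Matrix.diagonal_apply, Matrix.fromBlocks]
  refine ⟨Matrix.fromBlocks P 0 0 1, Matrix.fromBlocks Q 0 0 1, ?_, ?_, ?_⟩
  · rw [Matrix.det_fromBlocks_zero₂₁, Matrix.det_one, mul_one]; exact hP
  · rw [Matrix.det_fromBlocks_zero₂₁, Matrix.det_one, mul_one]; exact hQ
  · rw [hblock u', hblock u, hE]
    simp only [Matrix.fromBlocks_multiply, Matrix.mul_zero, Matrix.zero_mul, add_zero,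
      zero_add, Matrix.mul_one, Matrix.one_mul]

end DRel
section MRel
variable {R : Type*} [CommRing R]
variable {ι κ lll : Type*} [Fintype ι] [DecidableEq ι] [Fintype κ] [DecidableEq κ]
  [Fintype lll] [DecidableEq lll]

lemma diagonal_comp_equiv (v : ι → R) (e : κ ≃ ι) :
    Matrix.diagonal (v ∘ e) = (Matrix.diagonal v).submatrix e e := by
  ext i j
  simp [Matrix.diagonal_apply, e.injective.eq_iff]

/-- Cross-type diagonal equivalence. -/
def MRel (v : ι → R) (w : κ → R) : Prop := ∃ e : ι ≃ κ, DRel v (w ∘ e)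

lemma MRel.refl (v : ι → R) : MRel v v := ⟨Equiv.refl ι, DRel.refl v⟩

lemma MRel.symm {v : ι → R} {w : κ → R} (h : MRel v w) : MRel w v := by
  obtain ⟨e, hd⟩ := h
  refine ⟨e.symm, ?_⟩
  have := (hd.symm).reindex e.symm
  have hw : (v ∘ e.symm) = v ∘ ⇑e.symm := rfl
  have hcomp : ((w ∘ ⇑e) ∘ ⇑e.symm) = w := by
    funext i; simp
  rwa [hcomp] at this

lemma MRel.trans {u : ι → R} {v : κ → R} {w : lll → R}
    (h₁ : MRel u v) (h₂ : MRel v w) : MRel u w := by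
  obtain ⟨e₁, hd₁⟩ := h₁
  obtain ⟨e₂, hd₂⟩ := h₂
  exact ⟨e₁.trans e₂, hd₁.trans (hd₂.reindex e₁)⟩

lemma MRel.minorsSpan_eq {v : ι → R} {w : κ → R} (h : MRel v w) (s : ℕ) :
    minorsSpan s (Matrix.diagonal v) = minorsSpan s (Matrix.diagonal w) := by
  obtain ⟨e, P, Q, hP, hQ, hE⟩ := h
  have h1 : minorsSpan s (Matrix.diagonal (w ∘ e)) = minorsSpan s (Matrix.diagonal w) := by
    rw [diagonal_comp_equiv, minorsSpan_submatrix_equiv]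
  have h2 : minorsSpan s (Matrix.diagonal (w ∘ e)) ≤ minorsSpan s (Matrix.diagonal v) := by
    rw [hE]
    exact le_trans (minorsSpan_mul_right s _ Q) (minorsSpan_mul_left s P _)
  have hsym : DRel (w ∘ e) v := DRel.symm ⟨P, Q, hP, hQ, hE⟩
  obtain ⟨P', Q', hP', hQ', hE'⟩ := hsym
  have h3 : minorsSpan s (Matrix.diagonal v) ≤ minorsSpan s (Matrix.diagonal (w ∘ e)) := by
    rw [hE']
    exact le_trans (minorsSpan_mul_right s _ Q') (minorsSpan_mul_left s P' _)
  rw [← h1]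
  exact le_antisymm h3 h2

lemma MRel.piQuotEquiv {v : ι → R} {w : κ → R} (h : MRel v w) :
    Nonempty ((∀ i, R ⧸ Ideal.span {v i}) ≃ₗ[R] (∀ i, R ⧸ Ideal.span {w i})) := by
  obtain ⟨e, P, Q, hP, hQ, hE⟩ := h
  obtain ⟨uP, huP⟩ := (Matrix.isUnit_iff_isUnit_det P).2 hP
  have hPtop : LinearMap.range P.vecMulLinear = ⊤ := by
    rw [LinearMap.range_eq_top]
    intro y
    refine ⟨(↑uP⁻¹ : Matrix ι ι R).vecMulLinear y, ?_⟩
    show ((↑uP⁻¹ : Matrix ι ι R).vecMulLinear y) ᵥ* P = y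
    rw [Matrix.vecMulLinear_apply, Matrix.vecMul_vecMul, ← huP, Units.inv_mul, Matrix.vecMul_one]
  have ce : ((ι → R) ⧸ LinearMap.range (Matrix.diagonal (w ∘ e)).vecMulLinear) ≃ₗ[R]
      ((ι → R) ⧸ LinearMap.range (Matrix.diagonal v).vecMulLinear) :=
    cokerEquivOfEq _ _ P Q hPtop hQ hE
  exact ⟨((cokerDiagonalEquiv v).symm.trans ce.symm).trans
    ((cokerDiagonalEquiv (w ∘ e)).trans
      (LinearEquiv.piCongrLeft R (fun k => R ⧸ Ideal.span {w k}) e))⟩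

end MRel
set_option linter.unusedSectionVars false

section Pair
variable {R : Type*} [CommRing R]

lemma DRel.sumCongrRight {ι κ : Type*} [Fintype ι] [DecidableEq ι] [Fintype κ] [DecidableEq κ]
    {v v' : ι → R} (u : κ → R) (h : DRel v v') :
    DRel (Sum.elim u v) (Sum.elim u v') := by
  obtain ⟨P, Q, hP, hQ, hE⟩ := h
  have hblock : ∀ w : ι → R, Matrix.diagonal (Sum.elim u w) =
      Matrix.fromBlocks (Matrix.diagonal u) 0 0 (Matrix.diagonal w) := by
    intro w
    ext (i | i) (j | j) <;> simp [Matrix.diagonal_apply, Matrix.fromBlocks]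
  refine ⟨Matrix.fromBlocks 1 0 0 P, Matrix.fromBlocks 1 0 0 Q, ?_, ?_, ?_⟩
  · rw [Matrix.det_fromBlocks_zero₂₁, Matrix.det_one, one_mul]; exact hP
  · rw [Matrix.det_fromBlocks_zero₂₁, Matrix.det_one, one_mul]; exact hQ
  · rw [hblock v', hblock v, hE]
    simp only [Matrix.fromBlocks_multiply, Matrix.mul_zero, Matrix.zero_mul, add_zero,
      zero_add, Matrix.mul_one, Matrix.one_mul]

lemma pair_drel [IsDomain R] {a b g : R}
    (hspan : Ideal.span {a, b} = Ideal.span {g}) (hg : g ≠ 0) :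
    ∃ l : R, g ∣ l ∧ DRel (R := R) ![a, b] ![g, l] := by
  have hga : g ∣ a := Ideal.mem_span_singleton.1
    (hspan ▸ Ideal.subset_span (by simp))
  have hgb : g ∣ b := Ideal.mem_span_singleton.1
    (hspan ▸ Ideal.subset_span (by simp))
  obtain ⟨a₁, ha⟩ := hga
  obtain ⟨b₁, hb⟩ := hgb
  have hgmem : g ∈ Ideal.span ({a, b} : Set R) := by
    rw [hspan]; exact Ideal.mem_span_singleton_self g
  obtain ⟨u, v, huv⟩ := Ideal.mem_span_pair.1 hgmem
  have h1 : u * a₁ + v * b₁ = 1 := by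
    apply mul_left_cancel₀ hg
    rw [mul_one, mul_add, ← mul_assoc, ← mul_assoc, mul_comm g u, mul_comm g v]
    rw [mul_assoc, ← ha, mul_assoc, ← hb]
    exact huv
  refine ⟨g * a₁ * b₁, ⟨a₁ * b₁, by ring⟩, ?_⟩
  refine ⟨!![u, v; -b₁, a₁], !![1, -(v*b₁); 1, u*a₁], ?_, ?_, ?_⟩
  · have : (!![u, v; -b₁, a₁] : Matrix (Fin 2) (Fin 2) R).det = 1 := by
      rw [Matrix.det_fin_two_of]
      linear_combination h1
    rw [this]; exact isUnit_one
  · have : (!![1, -(v*b₁); 1, u*a₁] : Matrix (Fin 2) (Fin 2) R).det = 1 := by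
      rw [Matrix.det_fin_two_of]
      linear_combination h1
    rw [this]; exact isUnit_one
  · subst ha hb
    ext i j
    fin_cases i <;> fin_cases j <;>
      simp [Matrix.mul_apply, Fin.sum_univ_two, Matrix.diagonal_apply, Matrix.vecMul_diagonal,
        Matrix.vecMul, dotProduct]
    · linear_combination -huv
    · linear_combination
    · linear_combination
    · linear_combination (-(g*a₁*b₁)) * h1

end Pair
section Chainify
variable {R : Type*} [CommRing R]

lemma cons_comp_equiv {M : ℕ} (x : R) (t : Fin M → R) :
    ∀ s : Fin 1 ⊕ Fin M, (Fin.cons x t : Fin (M+1) → R)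
      ((finSumFinEquiv.trans (finCongr (Nat.add_comm 1 M))) s) = Sum.elim (fun _ => x) t s := by
  rintro (i | j)
  · have h0 : (finSumFinEquiv.trans (finCongr (Nat.add_comm 1 M))) (Sum.inl i)
        = (0 : Fin (M+1)) := by
      apply Fin.ext
      have : (i : ℕ) = 0 := by omega
      simp [finCongr_apply, this]
    rw [h0, Fin.cons_zero]
    rfl
  · have h0 : (finSumFinEquiv.trans (finCongr (Nat.add_comm 1 M))) (Sum.inr j) = j.succ := by
      apply Fin.ext
      simp [finCongr_apply]
      try omega
    rw [h0, Fin.cons_succ]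
    rfl

lemma cons2_comp_equiv {M : ℕ} (a b : R) (t : Fin M → R) :
    ∀ s : Fin 2 ⊕ Fin M, (Fin.cons a (Fin.cons b t) : Fin (M+2) → R)
      ((finSumFinEquiv.trans (finCongr (Nat.add_comm 2 M))) s) = Sum.elim ![a, b] t s := by
  rintro (i | j)
  · refine Fin.cases ?_ (fun i' => ?_) i
    · have h0 : (finSumFinEquiv.trans (finCongr (Nat.add_comm 2 M))) (Sum.inl (0 : Fin 2))
          = (0 : Fin (M+2)) := by
        apply Fin.ext; simp [finCongr_apply]
      rw [h0, Fin.cons_zero]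
      rfl
    · have hi' : i' = 0 := Fin.fin_one_eq_zero i'
      subst hi'
      have h0 : (finSumFinEquiv.trans (finCongr (Nat.add_comm 2 M))) (Sum.inl ((0 : Fin 1).succ))
          = (Fin.succ 0 : Fin (M+2)) := by
        apply Fin.ext; simp [finCongr_apply]
      rw [h0, Fin.cons_succ, Fin.cons_zero]
      rfl
  · have h0 : (finSumFinEquiv.trans (finCongr (Nat.add_comm 2 M))) (Sum.inr j)
        = j.succ.succ := by
      apply Fin.ext
      simp [finCongr_apply]
      try omega
    rw [h0, Fin.cons_succ, Fin.cons_succ]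
    rfl

/-- Translate a pointwise reindexing identity into an `MRel`. -/
lemma MRel.of_comp_eq {ι κ : Type*} [Fintype ι] [DecidableEq ι] [Fintype κ] [DecidableEq κ]
    {v : ι → R} {w : κ → R} (e : κ ≃ ι) (h : ∀ s, v (e s) = w s) : MRel v w := by
  refine ⟨e.symm, ?_⟩
  have hw : w ∘ ⇑e.symm = v := by
    funext i
    rw [Function.comp_apply, ← h (e.symm i), Equiv.apply_symm_apply]
  rw [hw]
  exact DRel.refl v

lemma MRel.cons_congr {M M' : ℕ} (x : R) {t : Fin M → R} {t' : Fin M' → R}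
    (h : MRel t t') : MRel (Fin.cons x t) (Fin.cons x t') := by
  have e1 : MRel (Fin.cons x t : Fin (M+1) → R) (Sum.elim (fun _ => x) t) :=
    MRel.of_comp_eq _ (cons_comp_equiv x t)
  have e3 : MRel (Fin.cons x t' : Fin (M'+1) → R) (Sum.elim (fun _ => x) t') :=
    MRel.of_comp_eq _ (cons_comp_equiv x t')
  obtain ⟨e, hd⟩ := h
  have mid : MRel (Sum.elim (fun _ : Fin 1 => x) t) (Sum.elim (fun _ : Fin 1 => x) t') := by
    refine ⟨Equiv.sumCongr (Equiv.refl (Fin 1)) e, ?_⟩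
    have heq : (Sum.elim (fun _ : Fin 1 => x) t') ∘ (Equiv.sumCongr (Equiv.refl (Fin 1)) e)
        = Sum.elim (fun _ : Fin 1 => x) (t' ∘ e) := by
      funext s
      rcases s with i | j <;> simp
    rw [heq]
    exact DRel.sumCongrRight _ hd
  exact (e1.trans mid).trans e3.symm

lemma MRel.pair_front {M : ℕ} {a b g l : R} (rest : Fin M → R)
    (h : DRel (R := R) ![a, b] ![g, l]) :
    MRel (Fin.cons a (Fin.cons b rest)) (Fin.cons g (Fin.cons l rest)) := by
  have e1 : MRel (Fin.cons a (Fin.cons b rest) : Fin (M+2) → R) (Sum.elim ![a, b] rest) :=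
    MRel.of_comp_eq _ (cons2_comp_equiv a b rest)
  have e3 : MRel (Fin.cons g (Fin.cons l rest) : Fin (M+2) → R) (Sum.elim ![g, l] rest) :=
    MRel.of_comp_eq _ (cons2_comp_equiv g l rest)
  have mid : MRel (Sum.elim (![a, b] : Fin 2 → R) rest) (Sum.elim (![g, l] : Fin 2 → R) rest) :=
    ⟨Equiv.refl _, by
      have : (Sum.elim (![g, l] : Fin 2 → R) rest) ∘ (Equiv.refl (Fin 2 ⊕ Fin M))
          = Sum.elim ![g, l] rest := by funext s; simp
      rw [this]
      exact DRel.sumCongrLeft rest h⟩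
  exact (e1.trans mid).trans e3.symm

variable [IsDomain R] [IsPrincipalIdealRing R]

lemma phase1 : ∀ (M : ℕ) (b : Fin (M+1) → R), ∃ b' : Fin (M+1) → R,
    MRel b b' ∧ ∀ i, b' 0 ∣ b' i := by
  intro M
  induction M with
  | zero =>
    intro b
    exact ⟨b, MRel.refl b, fun i => by rw [Fin.fin_one_eq_zero i]⟩
  | succ M ih =>
    intro b
    obtain ⟨t', ht1, ht2⟩ := ih (Fin.tail b)
    have h1 : MRel b (Fin.cons (b 0) t') := by
      have h := MRel.cons_congr (b 0) ht1
      rwa [Fin.cons_self_tail] at h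
    set a := b 0 with ha
    set g0 := t' 0 with hg0
    set rest : Fin M → R := Fin.tail t' with hrest
    have ht'decomp : t' = Fin.cons g0 rest := (Fin.cons_self_tail t').symm
    obtain ⟨g, hgspan⟩ : ∃ g, Ideal.span ({a, g0} : Set R) = Ideal.span {g} := by
      have := (IsPrincipalIdealRing.principal (Ideal.span ({a, g0} : Set R)))
      obtain ⟨g, hg⟩ := this
      exact ⟨g, by rw [hg]⟩
    by_cases hgz : g = 0
    · have hsub : Ideal.span ({a, g0} : Set R) = ⊥ := by
        rw [hgspan, hgz, Ideal.span_singleton_eq_bot.2 rfl]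
      have haz : a = 0 := by
        have : a ∈ (⊥ : Ideal R) := hsub ▸ Ideal.subset_span (by simp)
        simpa using this
      have hg0z : g0 = 0 := by
        have : g0 ∈ (⊥ : Ideal R) := hsub ▸ Ideal.subset_span (by simp)
        simpa using this
      refine ⟨Fin.cons a t', h1, ?_⟩
      have hz : ∀ k, (Fin.cons a t' : Fin (M+2) → R) k = 0 := by
        intro k
        refine Fin.cases ?_ ?_ k
        · rw [Fin.cons_zero]; exact haz
        · intro j
          rw [Fin.cons_succ]
          have h := ht2 j
          rw [hg0z] at h
          exact (zero_dvd_iff.1 h)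
      intro i
      rw [hz 0, hz i]
    · obtain ⟨l, hgl, hdrel⟩ := pair_drel hgspan hgz
      refine ⟨Fin.cons g (Fin.cons l rest), ?_, ?_⟩
      · refine h1.trans ?_
        rw [ht'decomp]
        exact MRel.pair_front rest hdrel
      · have hga : g ∣ a := Ideal.mem_span_singleton.1
          (hgspan ▸ Ideal.subset_span (by simp))
        have hgg0 : g ∣ g0 := Ideal.mem_span_singleton.1
          (hgspan ▸ Ideal.subset_span (by simp))
        intro i
        rw [Fin.cons_zero]
        refine Fin.cases ?_ ?_ i
        · rw [Fin.cons_zero]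
        · intro j
          rw [Fin.cons_succ]
          refine Fin.cases ?_ ?_ j
          · rw [Fin.cons_zero]; exact hgl
          · intro j'
            rw [Fin.cons_succ]
            exact hgg0.trans (ht2 j'.succ)

lemma mem_minorsSpan_one {K : Type*} [Fintype K] [DecidableEq K] (w : K → R) (i : K) :
    w i ∈ minorsSpan 1 (Matrix.diagonal w) := by
  refine Ideal.subset_span ⟨fun _ => i, fun _ => i,
    Function.injective_of_subsingleton _, Function.injective_of_subsingleton _, ?_⟩
  rw [Matrix.det_fin_one]
  simp

lemma minorsSpan_one_le {K : Type*} [Fintype K] [DecidableEq K] {w : K → R} {x : R}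
    (h : ∀ i, x ∣ w i) : minorsSpan 1 (Matrix.diagonal w) ≤ Ideal.span {x} := by
  rw [minorsSpan, Ideal.span_le]
  rintro d ⟨f, g, hf, hg, rfl⟩
  rw [Matrix.det_fin_one]
  simp only [Matrix.submatrix_apply, Matrix.diagonal_apply]
  refine Ideal.mem_span_singleton.2 ?_
  by_cases hfg : f 0 = g 0
  · rw [if_pos hfg]; exact h _
  · rw [if_neg hfg]; exact dvd_zero x

lemma exists_chain : ∀ (N : ℕ) (b : Fin N → R), ∃ c : Fin N → R,
    (∀ i j : Fin N, i ≤ j → c i ∣ c j) ∧ MRel b c := by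
  intro N
  induction N with
  | zero => intro b; exact ⟨b, fun i => i.elim0, MRel.refl b⟩
  | succ M ih =>
    intro b
    obtain ⟨b', hb1, hb2⟩ := phase1 M b
    obtain ⟨c', hc1, hc2⟩ := ih (Fin.tail b')
    have hmrel : MRel b (Fin.cons (b' 0) c') := by
      refine hb1.trans ?_
      have h := MRel.cons_congr (b' 0) hc2
      rwa [Fin.cons_self_tail] at h
    have hdvd : ∀ i, b' 0 ∣ c' i := by
      intro i
      have h1 : c' i ∈ minorsSpan 1 (Matrix.diagonal c') := mem_minorsSpan_one c' i
      rw [← hc2.minorsSpan_eq 1] at h1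
      have h2 : minorsSpan 1 (Matrix.diagonal (Fin.tail b')) ≤ Ideal.span {b' 0} :=
        minorsSpan_one_le (fun j => hb2 j.succ)
      exact Ideal.mem_span_singleton.1 (h2 h1)
    refine ⟨Fin.cons (b' 0) c', ?_, hmrel⟩
    intro i j hij
    rcases Fin.eq_zero_or_eq_succ i with rfl | ⟨i', rfl⟩
    · rw [Fin.cons_zero]
      rcases Fin.eq_zero_or_eq_succ j with rfl | ⟨j', rfl⟩
      · rw [Fin.cons_zero]
      · rw [Fin.cons_succ]; exact hdvd j'
    · rcases Fin.eq_zero_or_eq_succ j with rfl | ⟨j', rfl⟩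
      · exact absurd hij (by simp [Fin.le_def])
      · rw [Fin.cons_succ, Fin.cons_succ]
        exact hc1 i' j' (by rwa [Fin.succ_le_succ_iff] at hij)

end Chainify
section ChainDiag
variable {R : Type*} [CommRing R]

lemma strictMono_fin_le {s : ℕ} (F : Fin s → ℕ) (hF : StrictMono F) (i : Fin s) :
    (i : ℕ) ≤ F i := by
  induction' hi : (i : ℕ) with k ih generalizing i
  · exact Nat.zero_le _
  · have hk : k < s := by omega
    have h1 : (⟨k, hk⟩ : Fin s) < i := by
      rw [Fin.lt_def]
      show k < (i : ℕ)
      omega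
    have h2 := ih ⟨k, hk⟩ rfl
    have h3 := hF h1
    omega

lemma chain_prod_dvd [IsDomain R] {n s : ℕ} (c : Fin n → R)
    (hchain : ∀ i j : Fin n, i ≤ j → c i ∣ c j) (hs : s ≤ n)
    (g : Fin s → Fin n) (hg : Function.Injective g) :
    (∏ i : Fin s, c (Fin.castLE hs i)) ∣ ∏ i : Fin s, c (g i) := by
  classical
  set t : Finset (Fin n) := Finset.image g Finset.univ with ht
  have hcard : t.card = s := by
    rw [ht, Finset.card_image_of_injective _ hg, Finset.card_univ, Fintype.card_fin]
  set ρ := t.orderIsoOfFin hcard with hρ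
  have hmono : ∀ i : Fin s, Fin.castLE hs i ≤ (ρ i : Fin n) := by
    intro i
    have : StrictMono (fun i : Fin s => ((ρ i : Fin n) : ℕ)) := by
      intro x y hxy
      exact Fin.lt_def.1 (Subtype.coe_lt_coe.2 (ρ.strictMono hxy))
    have := strictMono_fin_le _ this i
    rw [Fin.le_def]
    simpa using this
  have h1 : (∏ i : Fin s, c (Fin.castLE hs i)) ∣ ∏ i : Fin s, c (ρ i) :=
    Finset.prod_dvd_prod_of_dvd _ _ (fun i _ => hchain _ _ (hmono i))
  have h2 : (∏ i : Fin s, c (ρ i)) = ∏ i : Fin s, c (g i) := by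
    have h2a : (∏ i : Fin s, c (ρ i)) = ∏ x : t, c x :=
      Fintype.prod_equiv ρ.toEquiv _ _ (fun i => rfl)
    rw [h2a, Finset.prod_coe_sort, ht, Finset.prod_image (fun x _ y _ h => hg h)]
  rw [← h2]
  exact h1

lemma chain_minorsSpan [IsDomain R] {n : ℕ} (c : Fin n → R)
    (hchain : ∀ i j : Fin n, i ≤ j → c i ∣ c j) {s : ℕ} (hs : s ≤ n) :
    minorsSpan s (Matrix.diagonal c) = Ideal.span {∏ i : Fin s, c (Fin.castLE hs i)} := by
  classical
  apply le_antisymm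
  · rw [minorsSpan, Ideal.span_le]
    rintro d ⟨f, g, hf, hg, rfl⟩
    refine Ideal.mem_span_singleton.2 ?_
    rw [Matrix.det_apply]
    refine Finset.dvd_sum (fun σ _ => ?_)
    have : ∀ z : ℤ, ∀ x : R, (∏ i : Fin s, c (Fin.castLE hs i)) ∣ x →
        (∏ i : Fin s, c (Fin.castLE hs i)) ∣ z • x := by
      intro z x hx
      rw [zsmul_eq_mul]
      exact Dvd.dvd.mul_left hx _
    rw [Units.smul_def]
    refine this _ _ ?_
    by_cases hall : ∀ i : Fin s, f (σ i) = g i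
    · have : (∏ i : Fin s, (Matrix.diagonal c).submatrix f g (σ i) i)
          = ∏ i : Fin s, c (g i) := by
        refine Finset.prod_congr rfl (fun i _ => ?_)
        simp [Matrix.diagonal_apply, hall i]
      rw [this]
      exact chain_prod_dvd c hchain hs g hg
    · push_neg at hall
      obtain ⟨i, hi⟩ := hall
      have : (∏ i : Fin s, (Matrix.diagonal c).submatrix f g (σ i) i) = 0 := by
        refine Finset.prod_eq_zero (Finset.mem_univ i) ?_
        simp [Matrix.diagonal_apply, hi]
      rw [this]
      exact dvd_zero _
  · rw [Ideal.span_le, Set.singleton_subset_iff]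
    have hdiag : (Matrix.diagonal c).submatrix (Fin.castLE hs) (Fin.castLE hs)
        = Matrix.diagonal (fun i : Fin s => c (Fin.castLE hs i)) := by
      ext i j
      by_cases hij : i = j
      · subst hij; simp
      · have : Fin.castLE hs i ≠ Fin.castLE hs j := fun h => hij (Fin.castLE_injective hs h)
        simp [Matrix.diagonal_apply, hij, this]
    refine Ideal.subset_span ⟨Fin.castLE hs, Fin.castLE hs, Fin.castLE_injective hs,
      Fin.castLE_injective hs, ?_⟩
    rw [hdiag, Matrix.det_diagonal]

end ChainDiag
/-- The `j`-th elementary ideal of an `m × n` matrix `X`: the whole ring if `j ≥ n`,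
and otherwise the ideal generated by the determinants of all `(n-j) × (n-j)`
submatrices of `X` (this is the zero ideal when `j < max(0, n-m)`, since then
there are no injective maps `Fin (n-j) → Fin m`). -/
def elemIdeal {R : Type*} [CommRing R] {m n : ℕ}
    (X : Matrix (Fin m) (Fin n) R) (j : ℕ) : Ideal R :=
  if n ≤ j then ⊤
  else Ideal.span {d | ∃ (f : Fin (n - j) → Fin m) (g : Fin (n - j) → Fin n),
    Function.Injective f ∧ Function.Injective g ∧ d = (X.submatrix f g).det}

section Bridge
variable {R : Type*} [CommRing R]

lemma elemIdeal_top {m n : ℕ} (X : Matrix (Fin m) (Fin n) R) {j : ℕ} (h : n ≤ j) :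
    elemIdeal X j = ⊤ := by rw [elemIdeal, if_pos h]

lemma elemIdeal_eq_minorsSpan {m n : ℕ} (X : Matrix (Fin m) (Fin n) R) {j : ℕ} (h : j < n) :
    elemIdeal X j = minorsSpan (n - j) X := by
  rw [elemIdeal, if_neg (not_le.2 h)]
  rfl

variable [IsDomain R] [IsPrincipalIdealRing R]

lemma exists_diagonal {m n : ℕ} (X : Matrix (Fin m) (Fin n) R) :
    ∃ b : Fin n → R,
      (∀ j, elemIdeal X j = elemIdeal (Matrix.diagonal b) j) ∧
      Nonempty ((((Fin n → R) ⧸ LinearMap.range X.vecMulLinear)) ≃ₗ[R]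
        ((Fin n → R) ⧸ LinearMap.range (Matrix.diagonal b).vecMulLinear)) := by
  classical
  set N := LinearMap.range X.vecMulLinear with hN
  obtain ⟨k, snf⟩ := N.smithNormalForm (Pi.basisFun R (Fin n))
  obtain ⟨bM, bN, femb, a, hsnf⟩ := snf
  set b : Fin n → R := fun i => if h : ∃ t, femb t = i then a h.choose else 0 with hb
  have hbf : ∀ t, b (femb t) = a t := by
    intro t
    have hex : ∃ t', femb t' = femb t := ⟨t, rfl⟩
    rw [hb]
    dsimp only
    rw [dif_pos hex]
    congr 1
    exact femb.injective hex.choose_spec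
  set Q : Matrix (Fin n) (Fin n) R := Matrix.of (fun i j => bM i j) with hQ
  have hQdet : IsUnit Q.det := by
    have hQT : Qᵀ = (Pi.basisFun R (Fin n)).toMatrix bM := by
      ext i j
      simp [Module.Basis.toMatrix_apply, hQ]
    have hinv : Invertible ((Pi.basisFun R (Fin n)).toMatrix ⇑bM) :=
      (Pi.basisFun R (Fin n)).invertibleToMatrix bM
    have h1 : IsUnit ((Pi.basisFun R (Fin n)).toMatrix ⇑bM).det :=
      Matrix.isUnit_det_of_invertible _
    rw [← Matrix.det_transpose, hQT]
    exact h1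
  set D : Matrix (Fin n) (Fin n) R := Matrix.diagonal b * Q with hD
  have hDrow : ∀ i, D i = b i • (bM i : Fin n → R) := by
    intro i
    funext j
    rw [hD]
    simp [Matrix.diagonal_mul, hQ]
  have hNspan : N = Submodule.span R (Set.range X) := range_vecMulLinear X
  have hbNspan : Submodule.span R (Set.range (fun t => (bN t : Fin n → R))) = N := by
    have h1 := Module.Basis.span_eq bN
    have h2 := congrArg (Submodule.map N.subtype) h1
    rwa [Submodule.map_span, Submodule.map_top, Submodule.range_subtype,
      ← Set.range_comp] at h2
  have hDspan : LinearMap.range D.vecMulLinear = N := by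
    rw [range_vecMulLinear]
    apply le_antisymm
    · rw [Submodule.span_le]
      rintro _ ⟨i, rfl⟩
      rw [show D.row i = D i from rfl, hDrow i]
      by_cases hex : ∃ t, femb t = i
      · obtain ⟨t, ht⟩ := hex
        rw [← ht, hbf t, ← hsnf t]
        exact SetLike.coe_mem _
      · have hbz : b i = 0 := by rw [hb]; exact dif_neg hex
        rw [hbz, zero_smul]
        exact Submodule.zero_mem N
    · rw [← hbNspan, Submodule.span_le]
      rintro _ ⟨t, rfl⟩
      have hrow : (bN t : Fin n → R) = D (femb t) := by rw [hDrow, hbf, hsnf t]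
      show (bN t : Fin n → R) ∈ (Submodule.span R (Set.range D) : Submodule R (Fin n → R))
      rw [hrow]
      exact Submodule.subset_span ⟨femb t, rfl⟩
  have cokerD : ((Fin n → R) ⧸ N) ≃ₗ[R]
      ((Fin n → R) ⧸ LinearMap.range (Matrix.diagonal b).vecMulLinear) := by
    have e1 : ((Fin n → R) ⧸ N) ≃ₗ[R] ((Fin n → R) ⧸ LinearMap.range D.vecMulLinear) :=
      Submodule.quotEquivOfEq _ _ hDspan.symm
    have e2 : ((Fin n → R) ⧸ LinearMap.range D.vecMulLinear) ≃ₗ[R]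
        ((Fin n → R) ⧸ LinearMap.range (Matrix.diagonal b).vecMulLinear) := by
      refine cokerEquivOfEq D (Matrix.diagonal b) 1 Q ?_ hQdet (by rw [hD, Matrix.one_mul])
      rw [LinearMap.range_eq_top]
      intro y
      exact ⟨y, by simp [Matrix.vecMul_one]⟩
    exact e1.trans e2
  have hXfact : ∃ C : Matrix (Fin m) (Fin n) R, X = C * D := by
    apply exists_matrix_factor
    intro i
    have h1 : X i ∈ N := hNspan ▸ Submodule.subset_span ⟨i, rfl⟩
    have h2 : N = Submodule.span R (Set.range D) := by rw [← hDspan, range_vecMulLinear]; rfl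
    exact h2 ▸ h1
  have hDfact : ∃ C : Matrix (Fin n) (Fin m) R, D = C * X := by
    apply exists_matrix_factor
    intro i
    have h3 : D i ∈ Submodule.span R (Set.range D.row) := Submodule.subset_span ⟨i, rfl⟩
    rw [← range_vecMulLinear, hDspan, hNspan] at h3
    exact h3
  obtain ⟨C1, hC1⟩ := hXfact
  obtain ⟨C2, hC2⟩ := hDfact
  have hminors : ∀ s, minorsSpan s X = minorsSpan (R := R) s (Matrix.diagonal b) := by
    intro s
    have u1 : minorsSpan s X ≤ minorsSpan s D := by rw [hC1]; exact minorsSpan_mul_left s C1 D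
    have u2 : minorsSpan s D ≤ minorsSpan s X := by rw [hC2]; exact minorsSpan_mul_left s C2 X
    have u3 : minorsSpan s D ≤ minorsSpan s (Matrix.diagonal b) := by
      rw [hD]; exact minorsSpan_mul_right s _ Q
    have u4 : minorsSpan s (Matrix.diagonal b) ≤ minorsSpan s D := by
      obtain ⟨uQ, huQ⟩ := (Matrix.isUnit_iff_isUnit_det Q).2 hQdet
      have hDQ : Matrix.diagonal b = D * (↑uQ⁻¹ : Matrix (Fin n) (Fin n) R) := by
        rw [hD, Matrix.mul_assoc, ← huQ, Units.mul_inv, Matrix.mul_one]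
      rw [hDQ]
      exact minorsSpan_mul_right s _ _
    exact le_antisymm (le_trans u1 u3) (le_trans u4 u2)
  refine ⟨b, ?_, ⟨cokerD⟩⟩
  intro j
  by_cases hj : n ≤ j
  · rw [elemIdeal_top X hj, elemIdeal_top _ hj]
  · push_neg at hj
    rw [elemIdeal_eq_minorsSpan X hj, elemIdeal_eq_minorsSpan _ hj, hminors]

end Bridge
section Compare
variable {R : Type*} [CommRing R]

/-- Pi over a sum type splits as a product, linearly. -/
def linearSumPi {ι κ : Type*} (W : ι ⊕ κ → Type*) [∀ s, AddCommGroup (W s)]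
    [∀ s, Module R (W s)] :
    (∀ s, W s) ≃ₗ[R] (∀ i, W (Sum.inl i)) × (∀ j, W (Sum.inr j)) where
  toFun f := (fun i => f (Sum.inl i), fun j => f (Sum.inr j))
  invFun p s := match s with
    | Sum.inl i => p.1 i
    | Sum.inr j => p.2 j
  map_add' _ _ := rfl
  map_smul' _ _ := rfl
  left_inv f := by funext s; cases s <;> rfl
  right_inv p := rfl

/-- Kill a subsingleton factor in a product. -/
def prodSubsingletonEquiv (A B : Type*) [AddCommGroup A] [Module R A]
    [AddCommGroup B] [Module R B] [Subsingleton A] : (A × B) ≃ₗ[R] B :=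
  LinearEquiv.ofLinear (LinearMap.snd R A B) (LinearMap.prod 0 LinearMap.id)
    (by ext x; simp)
    (by
      apply LinearMap.ext
      intro x
      exact Prod.ext (Subsingleton.elim _ _) rfl)

variable [IsDomain R]

lemma Pfilter_succ {N : ℕ} (w : Fin N → R) {r : ℕ} (hr : r < N) :
    (∏ i ∈ Finset.univ.filter (fun i : Fin N => (i : ℕ) < r + 1), w i)
      = (∏ i ∈ Finset.univ.filter (fun i : Fin N => (i : ℕ) < r), w i) * w ⟨r, hr⟩ := by
  have hins : Finset.univ.filter (fun i : Fin N => (i : ℕ) < r + 1)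
      = insert (⟨r, hr⟩ : Fin N) (Finset.univ.filter (fun i : Fin N => (i : ℕ) < r)) := by
    ext x
    simp only [Finset.mem_filter, Finset.mem_insert, Finset.mem_univ, true_and, Fin.ext_iff]
    omega
  rw [hins, Finset.prod_insert (by simp)]
  ring

lemma Pfilter_zero_dvd {N : ℕ} (w : Fin N → R)
    (hchain : ∀ i j : Fin N, i ≤ j → w i ∣ w j) {r : ℕ} (hr : r < N)
    (h : (∏ i ∈ Finset.univ.filter (fun i : Fin N => (i : ℕ) < r), w i) = 0) :
    w ⟨r, hr⟩ = 0 := by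
  obtain ⟨i, hi, hiz⟩ := Finset.prod_eq_zero_iff.1 h
  simp only [Finset.mem_filter, Finset.mem_univ, true_and] at hi
  have : w i ∣ w ⟨r, hr⟩ := hchain _ _ (by rw [Fin.le_def]; exact le_of_lt hi)
  rw [hiz] at this
  exact zero_dvd_iff.1 this

lemma chain_minorsSpan' {n : ℕ} (c : Fin n → R)
    (hchain : ∀ i j : Fin n, i ≤ j → c i ∣ c j) {s : ℕ} (hs : s ≤ n) :
    minorsSpan s (Matrix.diagonal c)
      = Ideal.span {∏ i ∈ Finset.univ.filter (fun i : Fin n => (i : ℕ) < s), c i} := by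
  rw [chain_minorsSpan c hchain hs]
  have himg : Finset.image (Fin.castLE hs) Finset.univ
      = Finset.univ.filter (fun i : Fin n => (i : ℕ) < s) := by
    ext x
    simp only [Finset.mem_image, Finset.mem_filter, Finset.mem_univ, true_and]
    constructor
    · rintro ⟨i, rfl⟩
      exact i.isLt
    · intro hx
      exact ⟨⟨(x : ℕ), hx⟩, Fin.ext rfl⟩
  have hprod : (∏ i : Fin s, c (Fin.castLE hs i))
      = ∏ i ∈ Finset.univ.filter (fun i : Fin n => (i : ℕ) < s), c i := by
    rw [← himg, Finset.prod_image (fun a _ b _ hab => Fin.castLE_injective hs hab)]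
  rw [hprod]

lemma chain_compare {n n' : ℕ} (hnn : n ≤ n') (c : Fin n → R) (c' : Fin n' → R)
    (hc : ∀ i j : Fin n, i ≤ j → c i ∣ c j) (hc' : ∀ i j : Fin n', i ≤ j → c' i ∣ c' j)
    (h : ∀ j, elemIdeal (Matrix.diagonal c) j = elemIdeal (Matrix.diagonal c') j) :
    Nonempty ((∀ i, R ⧸ Ideal.span {c i}) ≃ₗ[R] (∀ i, R ⧸ Ideal.span {c' i})) := by
  classical
  set Pc : ℕ → R := fun r => ∏ i ∈ Finset.univ.filter (fun i : Fin n => (i : ℕ) < r), c i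
    with hPc
  set Pc' : ℕ → R := fun r => ∏ i ∈ Finset.univ.filter (fun i : Fin n' => (i : ℕ) < r), c' i
    with hPc'
  set k := n' - n with hk
  have hkn : k + n = n' := by omega
  have hunits : ∀ i : Fin n', (i : ℕ) < k → IsUnit (c' i) := by
    intro i hi
    have hnn' : n < n' := by omega
    have h1 := h n
    rw [elemIdeal_top _ (le_refl n), elemIdeal_eq_minorsSpan _ hnn',
      chain_minorsSpan' c' hc' (by omega : n' - n ≤ n')] at h1
    have hP : IsUnit (∏ x ∈ Finset.univ.filter (fun x : Fin n' => (x : ℕ) < n' - n), c' x) :=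
      Ideal.span_singleton_eq_top.1 h1.symm
    refine isUnit_of_dvd_unit (Finset.dvd_prod_of_mem _ ?_) hP
    simp only [Finset.mem_filter, Finset.mem_univ, true_and]
    omega
  have hPc'unit : IsUnit (Pc' k) := by
    rw [hPc']
    refine Finset.prod_induction _ IsUnit (fun a b => IsUnit.mul) isUnit_one ?_
    intro x hx
    simp only [Finset.mem_filter, Finset.mem_univ, true_and] at hx
    exact hunits x hx
  have key : ∀ j, j < n → Ideal.span {Pc (n - j)} = Ideal.span {Pc' (n' - j)} := by
    intro j hj
    have h1 := h j
    rw [elemIdeal_eq_minorsSpan _ hj, elemIdeal_eq_minorsSpan _ (lt_of_lt_of_le hj hnn),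
      chain_minorsSpan' c hc (by omega : n - j ≤ n),
      chain_minorsSpan' c' hc' (by omega : n' - j ≤ n')] at h1
    exact h1
  have spanr : ∀ r, r ≤ n → Ideal.span {Pc r} = Ideal.span {Pc' (k + r)} := by
    intro r hr
    rcases Nat.eq_zero_or_pos r with rfl | hrpos
    · have h0 : Pc 0 = 1 := by
        rw [hPc]
        simp
      rw [h0, Nat.add_zero]
      rw [Ideal.span_singleton_eq_top.2 isUnit_one, Ideal.span_singleton_eq_top.2 hPc'unit]
    · have := key (n - r) (by omega)
      rw [show n - (n - r) = r by omega, show n' - (n - r) = k + r by omega] at this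
      exact this
  have perIdx : ∀ (r : ℕ) (hr : r < n) (hr' : k + r < n'),
      Ideal.span {c ⟨r, hr⟩} = Ideal.span {c' ⟨k + r, hr'⟩} := by
    intro r hr hr'
    have e1 := spanr r (le_of_lt hr)
    have e2 := spanr (r + 1) hr
    have s1 : Pc (r + 1) = Pc r * c ⟨r, hr⟩ := Pfilter_succ c hr
    have s2 : Pc' (k + (r + 1)) = Pc' (k + r) * c' ⟨k + r, hr'⟩ := by
      rw [show k + (r + 1) = (k + r) + 1 by omega]
      exact Pfilter_succ c' hr'
    by_cases hz : Pc r = 0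
    · have hcz : c ⟨r, hr⟩ = 0 := Pfilter_zero_dvd c hc hr hz
      have hz' : Pc' (k + r) = 0 := by
        have := e1
        rw [hz] at this
        rw [← Ideal.span_singleton_eq_bot]
        rw [← this, Ideal.span_singleton_eq_bot]
      have hcz' : c' ⟨k + r, hr'⟩ = 0 := Pfilter_zero_dvd c' hc' hr' hz'
      rw [hcz, hcz']
    · have hz' : Pc' (k + r) ≠ 0 := by
        intro h0
        rw [← Ideal.span_singleton_eq_bot] at h0
        rw [← e1, Ideal.span_singleton_eq_bot] at h0
        exact hz h0
      have a1 : Associated (Pc r) (Pc' (k + r)) :=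
        Ideal.span_singleton_eq_span_singleton.1 e1
      have a2 : Associated (Pc r * c ⟨r, hr⟩) (Pc' (k + r) * c' ⟨k + r, hr'⟩) := by
        rw [← s1, ← s2]
        exact Ideal.span_singleton_eq_span_singleton.1 e2
      have := Associated.of_mul_left a2 a1 hz
      exact Ideal.span_singleton_eq_span_singleton.2 this
  -- assemble the equivalence
  let e : Fin k ⊕ Fin n ≃ Fin n' := finSumFinEquiv.trans (finCongr hkn)
  have hinl : ∀ i : Fin k, ((e (Sum.inl i)) : ℕ) = (i : ℕ) := by
    intro i
    simp [e, finCongr_apply]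
  have hinr : ∀ i : Fin n, ((e (Sum.inr i)) : ℕ) = k + (i : ℕ) := by
    intro i
    simp [e, finCongr_apply]
  have compL : ∀ i : Fin k, Subsingleton (R ⧸ Ideal.span {c' (e (Sum.inl i))}) := by
    intro i
    rw [Submodule.Quotient.subsingleton_iff]
    exact Ideal.span_singleton_eq_top.2 (hunits _ (by rw [hinl i]; exact i.isLt))
  have compR : ∀ i : Fin n,
      (R ⧸ Ideal.span {c' (e (Sum.inr i))}) ≃ₗ[R] (R ⧸ Ideal.span {c i}) := by
    intro i
    refine Submodule.quotEquivOfEq _ _ ?_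
    have hidx : e (Sum.inr i) = ⟨k + (i : ℕ), by omega⟩ := Fin.ext (hinr i)
    rw [hidx, ← perIdx (i : ℕ) i.isLt (by omega)]
  haveI hsub : Subsingleton (∀ i : Fin k, R ⧸ Ideal.span {c' (e (Sum.inl i))}) :=
    ⟨fun a b => funext fun i => @Subsingleton.elim _ (compL i) _ _⟩
  let W : Fin n' → Type _ := fun i => R ⧸ Ideal.span {c' i}
  let E1 : (∀ s, W (e s)) ≃ₗ[R] (∀ i : Fin n', W i) :=
    LinearEquiv.piCongrLeft R W e
  let E2 : (∀ s : Fin k ⊕ Fin n, W (e s)) ≃ₗ[R]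
      (∀ i : Fin k, W (e (Sum.inl i))) × (∀ j : Fin n, W (e (Sum.inr j))) :=
    linearSumPi (fun s => W (e s))
  let F0 : (∀ i : Fin n, R ⧸ Ideal.span {c i}) ≃ₗ[R] (∀ j : Fin n, W (e (Sum.inr j))) :=
    LinearEquiv.piCongrRight (fun i => (compR i).symm)
  let F1 : (∀ j : Fin n, W (e (Sum.inr j))) ≃ₗ[R]
      (∀ i : Fin k, W (e (Sum.inl i))) × (∀ j : Fin n, W (e (Sum.inr j))) :=
    (prodSubsingletonEquiv _ _).symm
  exact ⟨((F0.trans F1).trans E2.symm).trans E1⟩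

end Compare
section Main
variable {R : Type*} [CommRing R] [IsDomain R] [IsPrincipalIdealRing R]

lemma coker_equiv_of_elemIdeal {m n m' n' : ℕ} (hnn : n ≤ n')
    (X : Matrix (Fin m) (Fin n) R) (X' : Matrix (Fin m') (Fin n') R)
    (h : ∀ j, elemIdeal X j = elemIdeal X' j) :
    Nonempty (((Fin n → R) ⧸ LinearMap.range X.vecMulLinear) ≃ₗ[R]
      ((Fin n' → R) ⧸ LinearMap.range X'.vecMulLinear)) := by
  obtain ⟨b, hb1, ⟨eb⟩⟩ := exists_diagonal X
  obtain ⟨b', hb1', ⟨eb'⟩⟩ := exists_diagonal X'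
  obtain ⟨c, hc_chain, hc_mrel⟩ := exists_chain n b
  obtain ⟨c', hc'_chain, hc'_mrel⟩ := exists_chain n' b'
  have e1 : ∀ j, elemIdeal (Matrix.diagonal b) j = elemIdeal (Matrix.diagonal c) j := by
    intro j
    by_cases hj : n ≤ j
    · rw [elemIdeal_top _ hj, elemIdeal_top _ hj]
    · push_neg at hj
      rw [elemIdeal_eq_minorsSpan _ hj, elemIdeal_eq_minorsSpan _ hj,
        hc_mrel.minorsSpan_eq]
  have e2 : ∀ j, elemIdeal (Matrix.diagonal b') j = elemIdeal (Matrix.diagonal c') j := by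
    intro j
    by_cases hj : n' ≤ j
    · rw [elemIdeal_top _ hj, elemIdeal_top _ hj]
    · push_neg at hj
      rw [elemIdeal_eq_minorsSpan _ hj, elemIdeal_eq_minorsSpan _ hj,
        hc'_mrel.minorsSpan_eq]
  have hmin : ∀ j, elemIdeal (Matrix.diagonal c) j = elemIdeal (Matrix.diagonal c') j := by
    intro j
    rw [← e1, ← e2, ← hb1 j, ← hb1' j, h j]
  obtain ⟨ecc⟩ := chain_compare hnn c c' hc_chain hc'_chain hmin
  obtain ⟨ebc⟩ := hc_mrel.piQuotEquiv
  obtain ⟨ebc'⟩ := hc'_mrel.piQuotEquiv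
  exact ⟨eb.trans ((cokerDiagonalEquiv b).trans (ebc.trans (ecc.trans
    (ebc'.symm.trans ((cokerDiagonalEquiv b').symm.trans eb'.symm)))))⟩

end Main

/-- Over a PID, two matrices with the same elementary ideals have cokernels with
isomorphic `Hom_R(-, M)` modules, for every `R`-module `M`. -/
theorem stmt13 {R : Type*} [CommRing R] [IsDomain R] [IsPrincipalIdealRing R]
    {m n m' n' : ℕ} (X : Matrix (Fin m) (Fin n) R) (X' : Matrix (Fin m') (Fin n') R)
    (h : ∀ j, elemIdeal X j = elemIdeal X' j)
    (M : Type*) [AddCommGroup M] [Module R M] :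
    Nonempty (((((Fin n → R) ⧸ LinearMap.range (Matrix.vecMulLinear X)) →ₗ[R] M)) ≃ₗ[R]
      (((Fin n' → R) ⧸ LinearMap.range (Matrix.vecMulLinear X')) →ₗ[R] M)) := by
  rcases le_total n n' with hnn | hnn
  · obtain ⟨E⟩ := coker_equiv_of_elemIdeal hnn X X' h
    exact ⟨LinearEquiv.arrowCongr E (LinearEquiv.refl R M)⟩
  · obtain ⟨E⟩ := coker_equiv_of_elemIdeal hnn X' X (fun j => (h j).symm)
    exact ⟨LinearEquiv.arrowCongr E.symm (LinearEquiv.refl R M)⟩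
end

section
/- Let R be a principal ideal domain with field of fractions F (or R itself a field), φ : Λ → R a ring homomorphism from a commutative ring Λ, and N a finitely presented Λ-module with presentation matrix X over Λ. Let j₀ be the smallest j such that the image under φ of the j-th elementary ideal of X is nonzero in R. Then for any F-vector space M regarded as a Λ-module via φ followed by R → F, the Λ-module Hom_Λ(N, M) is an F-vector space of dimension j₀ · dim_F M. -/
universe u

open Module Matrix

section Helpers

/-- Sum-of-scalar-multiples linear map. -/
def sumSMulMap (S : Type*) {M : Type*} [CommSemiring S] [AddCommMonoid M] [Module S M]
    {n : ℕ} (w : Fin n → M) : (Fin n → S) →ₗ[S] M where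
  toFun v := ∑ j, v j • w j
  map_add' a b := by simp [add_smul, Finset.sum_add_distrib]
  map_smul' c v := by simp [Finset.smul_sum, mul_smul]

lemma sumSMulMap_apply (S : Type*) {M : Type*} [CommSemiring S] [AddCommMonoid M] [Module S M]
    {n : ℕ} (w : Fin n → M) (v : Fin n → S) : sumSMulMap S w v = ∑ j, v j • w j := rfl

lemma sumSMulMap_single (S : Type*) {M : Type*} [CommSemiring S] [AddCommMonoid M] [Module S M]
    {n : ℕ} (w : Fin n → M) (j : Fin n) : sumSMulMap S w (Pi.single j 1) = w j := by
  rw [sumSMulMap_apply, Finset.sum_eq_single j]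
  · simp
  · intro k _ hk; simp [Pi.single_apply, hk]
  · simp

lemma vecMulLinear_eq_sum_rows {S : Type*} [CommRing S] {p q : ℕ}
    (A : Matrix (Fin p) (Fin q) S) (v : Fin p → S) :
    A.vecMulLinear v = ∑ i, v i • A i := by
  funext j
  simp [Matrix.vecMulLinear_apply, Matrix.vecMul, dotProduct, Finset.sum_apply]

lemma sum_smul_single {S : Type*} [CommRing S] {q : ℕ} (u : Fin q → S) :
    ∑ j, u j • (Pi.single j (1 : S) : Fin q → S) = u := by
  funext x
  rw [Finset.sum_apply, Finset.sum_eq_single x]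
  · simp
  · intro k _ hk; simp [Pi.single_apply, Ne.symm hk]
  · simp

variable {K : Type*} [Field K]

lemma rank_submatrix_le' {m n r s : ℕ} (Y : Matrix (Fin m) (Fin n) K)
    (f : Fin r → Fin m) (g : Fin s → Fin n) :
    (Y.submatrix f g).rank ≤ Y.rank := by
  have h1 : ∀ (A : Matrix (Fin m) (Fin n) K) (g : Fin s → Fin n),
      (A.submatrix id g).rank ≤ A.rank := by
    intro A g
    have he : (A.submatrix id g).mulVecLin =
        A.mulVecLin ∘ₗ sumSMulMap K (fun k => Pi.single (g k) (1 : K)) := by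
      apply LinearMap.ext; intro v; funext i
      simp only [mulVecLin_apply, LinearMap.comp_apply, sumSMulMap_apply, mulVec, dotProduct,
        submatrix_apply, id_eq]
      simp only [Finset.sum_apply, Pi.smul_apply, smul_eq_mul, Finset.mul_sum]
      rw [Finset.sum_comm]
      refine Finset.sum_congr rfl fun k _ => ?_
      rw [Finset.sum_eq_single (g k)]
      · simp
      · intro b _ hb; simp [Pi.single_apply, Ne.symm hb]
      · simp
    rw [Matrix.rank, Matrix.rank, he, LinearMap.range_comp]
    exact Submodule.finrank_mono (LinearMap.map_le_range)
  have h2 : ∀ (B : Matrix (Fin m) (Fin s) K) (f : Fin r → Fin m),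
      (B.submatrix f id).rank ≤ B.rank := by
    intro B f
    have he : (B.submatrix f id).mulVecLin = LinearMap.funLeft K K f ∘ₗ B.mulVecLin := by
      apply LinearMap.ext; intro v; funext i
      simp [mulVec, dotProduct]
    rw [Matrix.rank, Matrix.rank, he, LinearMap.range_comp]
    exact Submodule.finrank_map_le _ _
  have : Y.submatrix f g = (Y.submatrix id g).submatrix f id := by
    rw [submatrix_submatrix]; rfl
  rw [this]
  exact (h2 _ f).trans (h1 Y g)

lemma exists_inj_cols {m n r : ℕ} (Y : Matrix (Fin m) (Fin n) K) (hr : r ≤ Y.rank) :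
    ∃ g : Fin r → Fin n, Function.Injective g ∧ LinearIndependent K (fun k => Yᵀ (g k)) := by
  obtain ⟨b, hbsub, hbspan, hbind⟩ := exists_linearIndependent K (Set.range Yᵀ)
  have hbfin : b.Finite := hbind.setFinite
  haveI := hbfin.fintype
  have hcard : r ≤ Fintype.card b := by
    have h1 : Y.rank = finrank K (Submodule.span K b) := by
      rw [Y.rank_eq_finrank_span_cols, hbspan]; rfl
    have h2 : finrank K (Submodule.span K b) = b.toFinset.card :=
      finrank_span_set_eq_card hbind
    rw [h1, h2, Set.toFinset_card] at hr
    exact hr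
  let e : Fin r ↪ b := (Fin.castLEEmb hcard).trans (Fintype.equivFin b).symm.toEmbedding
  have hmem : ∀ x : b, (x : Fin m → K) ∈ Set.range Yᵀ := fun x => hbsub x.2
  choose idx hidx using fun x : b => hmem x
  refine ⟨fun k => idx (e k), ?_, ?_⟩
  · intro k k' hkk'
    apply e.injective
    apply Subtype.ext
    simp only at hkk'
    rw [← hidx (e k), ← hidx (e k'), hkk']
  · have : (fun k => Yᵀ (idx (e k))) = fun k => ((e k : b) : Fin m → K) := by
      funext k; rw [hidx (e k)]
    rw [this]
    exact hbind.comp e e.injective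

lemma minor_iff_rank {m n r : ℕ} (Y : Matrix (Fin m) (Fin n) K) :
    (∃ (f : Fin r → Fin m) (g : Fin r → Fin n),
      Function.Injective f ∧ Function.Injective g ∧ (Y.submatrix f g).det ≠ 0) ↔ r ≤ Y.rank := by
  constructor
  · rintro ⟨f, g, hf, hg, hdet⟩
    have hUnit : IsUnit (Y.submatrix f g) :=
      (Matrix.isUnit_iff_isUnit_det _).mpr (isUnit_iff_ne_zero.mpr hdet)
    have : (Y.submatrix f g).rank = r := by
      rw [Matrix.rank_of_isUnit _ hUnit, Fintype.card_fin]
    calc r = (Y.submatrix f g).rank := this.symm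
      _ ≤ Y.rank := rank_submatrix_le' Y f g
  · intro hr
    obtain ⟨g, hg, hgind⟩ := exists_inj_cols Y hr
    set Z : Matrix (Fin m) (Fin r) K := Y.submatrix id g with hZ
    have hZcols : LinearIndependent K fun k => Zᵀ k := by
      have : (fun k => Zᵀ k) = fun k => Yᵀ (g k) := by funext k; ext i; rfl
      rw [this]; exact hgind
    have hZrank : Z.rank = r := by
      rw [Z.rank_eq_finrank_span_cols]; exact (finrank_span_eq_card hZcols).trans (Fintype.card_fin r)
    have hZt : r ≤ Zᵀ.rank := by rw [Z.rank_transpose, hZrank]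
    obtain ⟨f, hf, hfind⟩ := exists_inj_cols Zᵀ hZt
    refine ⟨f, g, hf, hg, ?_⟩
    have hrows : LinearIndependent K fun k => (Y.submatrix f g) k := by
      have : (fun k => (Y.submatrix f g) k) = fun k => Zᵀᵀ (f k) := by
        funext k; ext l; rfl
      rw [this]; exact hfind
    have hUnit : IsUnit (Y.submatrix f g) := Matrix.linearIndependent_rows_iff_isUnit.mp hrows
    exact ((Matrix.isUnit_iff_isUnit_det _).mp hUnit).ne_zero

end Helpers

/-- Let `R` be a PID with field of fractions `F`, `φ : Λ → R` a ring homomorphism,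
and `N` the `Λ`-module presented by the matrix `X`. If `j₀` is the smallest `j`
with `φ(E_j(X)) ≠ (0)` in `R`, then for any `F`-vector space `M` regarded as a
`Λ`-module via `φ` followed by `R → F`, the module `Hom_Λ(N, M)` is an `F`-vector
space of dimension `j₀ · dim_F M`. -/
theorem stmt15 (Λ : Type u) (R : Type*) [CommRing Λ] [CommRing R] [IsDomain R]
    [IsPrincipalIdealRing R]
    (F : Type*) [Field F] [Algebra R F] [IsFractionRing R F]
    (φ : Λ →+* R)
    {m n : ℕ} (X : Matrix (Fin m) (Fin n) Λ)
    (M : Type u) [AddCommGroup M] [Module F M] [Module Λ M] [SMulCommClass Λ F M]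
    (hM : ∀ (l : Λ) (x : M), l • x = algebraMap R F (φ l) • x)
    (j₀ : ℕ) (hj₀ : IsLeast {j : ℕ | Ideal.map φ (elemIdeal X j) ≠ ⊥} j₀) :
    Module.rank F ((((Fin n → Λ) ⧸ LinearMap.range (Matrix.vecMulLinear X))) →ₗ[Λ] M)
      = (j₀ : Cardinal) * Module.rank F M := by
  classical
  set ψ : Λ →+* F := (algebraMap R F).comp φ with hψdef
  set Y : Matrix (Fin m) (Fin n) F := X.map ψ with hYdef
  have hYrank_le : Y.rank ≤ n := Y.rank_le_width
  have hdetmap : ∀ {r : ℕ} (f : Fin r → Fin m) (g : Fin r → Fin n),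
      (Y.submatrix f g).det = algebraMap R F (φ (X.submatrix f g).det) := by
    intro r f g
    have h1 : Y.submatrix f g = (X.submatrix f g).map ψ := by
      rw [hYdef]; exact Matrix.submatrix_map _ _ _ _
    have h2 := (ψ.map_det (X.submatrix f g)).symm
    rw [RingHom.mapMatrix_apply] at h2
    rw [h1, h2]
    rfl
  -- Step A: j₀ = n - Y.rank
  have hchar : ∀ j : ℕ, (Ideal.map φ (elemIdeal X j) ≠ ⊥) ↔ n - Y.rank ≤ j := by
    intro j
    by_cases hj : n ≤ j
    · simp only [elemIdeal, if_pos hj, Ideal.map_top]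
      constructor
      · intro _; omega
      · intro _
        intro h
        exact one_ne_zero ((Submodule.eq_bot_iff _).mp h 1 trivial)
    · simp only [elemIdeal, if_neg hj]
      rw [Ideal.map_span, Ne, Ideal.span_eq_bot]
      push_neg
      have key : (∃ x ∈ φ '' {d | ∃ (f : Fin (n - j) → Fin m) (g : Fin (n - j) → Fin n),
            Function.Injective f ∧ Function.Injective g ∧ d = (X.submatrix f g).det}, x ≠ 0) ↔
          n - j ≤ Y.rank := by
        rw [← minor_iff_rank (K := F) Y]
        constructor
        · rintro ⟨x, ⟨d, ⟨f, g, hf, hg, rfl⟩, rfl⟩, hx0⟩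
          refine ⟨f, g, hf, hg, ?_⟩
          rw [hdetmap f g]
          exact fun h => hx0 ((IsFractionRing.to_map_eq_zero_iff (K := F)).mp h)
        · rintro ⟨f, g, hf, hg, hdet⟩
          refine ⟨φ (X.submatrix f g).det, ⟨(X.submatrix f g).det, ⟨f, g, hf, hg, rfl⟩, rfl⟩, ?_⟩
          intro h0
          exact hdet (by rw [hdetmap f g, h0, map_zero])
      rw [key]
      omega
  have hj₀eq : j₀ = n - Y.rank := by
    have hSeq : {j : ℕ | Ideal.map φ (elemIdeal X j) ≠ ⊥} = {j : ℕ | n - Y.rank ≤ j} :=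
      Set.ext hchar
    rw [hSeq] at hj₀
    have hL : IsLeast {j : ℕ | n - Y.rank ≤ j} (n - Y.rank) :=
      ⟨by change n - Y.rank ≤ n - Y.rank; exact le_rfl, fun x hx => hx⟩
    exact hj₀.unique hL
  -- Step B
  set W : Submodule Λ (Fin n → Λ) := LinearMap.range (Matrix.vecMulLinear X) with hWdef
  set W' : Submodule F (Fin n → F) := LinearMap.range (Matrix.vecMulLinear Y) with hW'def
  have hfinW' : finrank F W' = Y.rank := by
    rw [← Y.rank_transpose, hW'def, ← Matrix.mulVecLin_transpose]
    rfl
  have hfinV : finrank F ((Fin n → F) ⧸ W') = n - Y.rank := by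
    have h1 := Submodule.finrank_quotient_add_finrank W'
    rw [Module.finrank_fin_fun, hfinW'] at h1
    omega
  set N := (Fin n → Λ) ⧸ W with hNdef
  set V := (Fin n → F) ⧸ W' with hVdef
  have hgenΛ : ∀ (f : (Fin n → Λ) →ₗ[Λ] M) (v : Fin n → Λ),
      f v = ∑ j, v j • f (Pi.single j 1) := by
    intro f v
    conv_lhs => rw [← sum_smul_single v, map_sum]
    exact Finset.sum_congr rfl fun j _ => by rw [_root_.map_smul]
  have hgenF : ∀ (f : (Fin n → F) →ₗ[F] M) (v : Fin n → F),
      f v = ∑ j, v j • f (Pi.single j 1) := by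
    intro f v
    conv_lhs => rw [← sum_smul_single v, map_sum]
    exact Finset.sum_congr rfl fun j _ => by rw [_root_.map_smul]
  set Φ : (N →ₗ[Λ] M) →ₗ[F] (Fin n → M) :=
    { toFun := fun f => fun j => f (Submodule.Quotient.mk (Pi.single j 1))
      map_add' := fun f g => by funext j; simp
      map_smul' := fun c f => by funext j; simp } with hΦdef
  set Ψ : (V →ₗ[F] M) →ₗ[F] (Fin n → M) :=
    { toFun := fun h => fun j => h (Submodule.Quotient.mk (Pi.single j 1))
      map_add' := fun f g => by funext j; simp
      map_smul' := fun c f => by funext j; simp } with hΨdef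
  have hΦapp : ∀ (f : N →ₗ[Λ] M) (j : Fin n),
      Φ f j = f (Submodule.Quotient.mk (Pi.single j 1)) := fun f j => rfl
  have hΨapp : ∀ (h : V →ₗ[F] M) (j : Fin n),
      Ψ h j = h (Submodule.Quotient.mk (Pi.single j 1)) := fun h j => rfl
  have hΦinj : Function.Injective Φ := by
    intro f f' hff'
    refine Submodule.linearMap_qext _ (LinearMap.ext fun v => ?_)
    have h1 := hgenΛ (f ∘ₗ W.mkQ) v
    have h2 := hgenΛ (f' ∘ₗ W.mkQ) v
    simp only [LinearMap.comp_apply] at h1 h2 ⊢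
    rw [h1, h2]
    exact Finset.sum_congr rfl fun j _ =>
      congrArg (fun z => v j • z) (congrFun hff' j)
  have hΨinj : Function.Injective Ψ := by
    intro f f' hff'
    refine Submodule.linearMap_qext _ (LinearMap.ext fun v => ?_)
    have h1 := hgenF (f ∘ₗ W'.mkQ) v
    have h2 := hgenF (f' ∘ₗ W'.mkQ) v
    simp only [LinearMap.comp_apply] at h1 h2 ⊢
    rw [h1, h2]
    exact Finset.sum_congr rfl fun j _ =>
      congrArg (fun z => v j • z) (congrFun hff' j)
  have hXrow : ∀ i : Fin m, (X i : Fin n → Λ) ∈ W :=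
    fun i => ⟨Pi.single i 1, by
      rw [vecMulLinear_eq_sum_rows, Finset.sum_eq_single i]
      · simp
      · intro k _ hk; simp [Pi.single_apply, hk]
      · simp⟩
  have hYrow : ∀ i : Fin m, (Y i : Fin n → F) ∈ W' :=
    fun i => ⟨Pi.single i 1, by
      rw [vecMulLinear_eq_sum_rows, Finset.sum_eq_single i]
      · simp
      · intro k _ hk; simp [Pi.single_apply, hk]
      · simp⟩
  have hrange : LinearMap.range Φ = LinearMap.range Ψ := by
    ext w
    simp only [LinearMap.mem_range]
    constructor
    · rintro ⟨f, rfl⟩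
      set g' : (Fin n → F) →ₗ[F] M :=
        sumSMulMap F (fun j => f (Submodule.Quotient.mk (Pi.single j 1))) with hg'def
      have hker : W' ≤ LinearMap.ker g' := by
        rintro x ⟨v, rfl⟩
        rw [LinearMap.mem_ker, vecMulLinear_eq_sum_rows, map_sum]
        refine Finset.sum_eq_zero fun i _ => ?_
        rw [_root_.map_smul]
        have hgY : g' (Y i) = f (Submodule.Quotient.mk (X i)) := by
          rw [hg'def, sumSMulMap_apply]
          have h2 : f (Submodule.Quotient.mk (X i))
              = ∑ j, X i j • f (Submodule.Quotient.mk (Pi.single j 1)) := by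
            have := hgenΛ (f ∘ₗ W.mkQ) (X i)
            exact this
          rw [h2]
          exact Finset.sum_congr rfl fun j _ => (hM (X i j) _).symm
        rw [hgY, (Submodule.Quotient.mk_eq_zero W).mpr (hXrow i), map_zero, smul_zero]
      refine ⟨W'.liftQ g' hker, ?_⟩
      funext j
      rw [hΨapp, hΦapp, Submodule.liftQ_apply, hg'def, sumSMulMap_single]
    · rintro ⟨h, rfl⟩
      set g : (Fin n → Λ) →ₗ[Λ] M :=
        sumSMulMap Λ (fun j => h (Submodule.Quotient.mk (Pi.single j 1))) with hgdef
      have hker : W ≤ LinearMap.ker g := by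
        rintro x ⟨v, rfl⟩
        rw [LinearMap.mem_ker, vecMulLinear_eq_sum_rows, map_sum]
        refine Finset.sum_eq_zero fun i _ => ?_
        rw [_root_.map_smul]
        have hgX : g (X i) = h (Submodule.Quotient.mk (Y i)) := by
          rw [hgdef, sumSMulMap_apply]
          have h2 : h (Submodule.Quotient.mk (Y i))
              = ∑ j, Y i j • h (Submodule.Quotient.mk (Pi.single j 1)) := by
            have := hgenF (h ∘ₗ W'.mkQ) (Y i)
            exact this
          rw [h2]
          exact Finset.sum_congr rfl fun j _ => (hM (X i j) _)
        rw [hgX, (Submodule.Quotient.mk_eq_zero W').mpr (hYrow i), map_zero, smul_zero]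
      refine ⟨W.liftQ g hker, ?_⟩
      funext j
      rw [hΦapp, hΨapp, Submodule.liftQ_apply, hgdef, sumSMulMap_single]
  -- conclude
  haveI hFD : FiniteDimensional F V :=
    (inferInstance : FiniteDimensional F ((Fin n → F) ⧸ W'))
  let b : Basis (Fin (finrank F V)) F V := Module.finBasis F V
  let E : (N →ₗ[Λ] M) ≃ₗ[F] (Fin (finrank F V) → M) :=
    ((LinearEquiv.ofInjective Φ hΦinj).trans ((LinearEquiv.ofEq _ _ hrange).trans
      (LinearEquiv.ofInjective Ψ hΨinj).symm)).trans (b.constr F).symm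
  have hr := E.rank_eq
  rw [hr, rank_fun_eq_lift_mul, Cardinal.lift_uzero, Fintype.card_fin, hfinV, ← hj₀eq]
end
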